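/- For λ = λ(m₃, …, m_{l−2}, n) with 0 ≤ m_r ≤ r−1 and 0 ≤ n ≤ l(l−1)−1, one has 2λ ∈ D if and only if either (1) n = 0 and for each r, m_r = 0 when r is odd and m_r ∈ {0, r/2} when r is even, or (2) n = l(l−1)/2 and 2m_r + l(l−1) ≡ 0 mod r for all 3 ≤ r ≤ l−2. -/
import Mathlib


/-- The standard basis vector `α_i` (0-indexed) of `L = ℤ^l`. -/
def al (l : ℕ) (i : ℕ) : Fin l → ℤ := fun j => if (j : ℕ) = i then 1 else 0

/-- `γ_r = α₁ + ⋯ + α_r - r·α_{r+1}` for `r ≤ l-1`, and `γ_l = α₁ + ⋯ + α_l`. -/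
def ga (l r : ℕ) : Fin l → ℤ :=
  fun j => if (j : ℕ) < r then 1 else if (j : ℕ) = r then -(r : ℤ) else 0

/-- `D = E + ℤγ₃ + ⋯ + ℤγ_l` where `E = ℤ(α₁-α₂) + ℤ(α₂-α₃)`. -/
def D (l : ℕ) : Submodule ℤ (Fin l → ℤ) :=
  Submodule.span ℤ ({al l 0 - al l 1, al l 1 - al l 2} ∪
    {x | ∃ r : ℕ, 3 ≤ r ∧ r ≤ l ∧ x = ga l r})

/-- `λ(m₃, …, m_{l-2}, n) = ∑_{r=3}^{l-2} m_r (α_r - α_{r+1}) + n α₂`. -/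
def lam (l : ℕ) (m : ℕ → ℕ) (n : ℕ) : Fin l → ℤ :=
  (∑ r ∈ Finset.Icc 3 (l - 2), (m r : ℤ) • (al l (r - 1) - al l r))
    + (n : ℤ) • al l 1

/-- partial sum of the first `r` coordinates, as a linear map -/
def psumL (l r : ℕ) : (Fin l → ℤ) →ₗ[ℤ] ℤ where
  toFun x := ∑ j : Fin l, if (j : ℕ) < r then x j else 0
  map_add' x y := by
    rw [← Finset.sum_add_distrib]
    refine Finset.sum_congr rfl fun j _ => ?_
    by_cases h : (j : ℕ) < r <;> simp [h]
  map_smul' c x := by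
    show (∑ j : Fin l, if (j : ℕ) < r then (c • x) j else 0)
        = (RingHom.id ℤ) c • ∑ j : Fin l, if (j : ℕ) < r then x j else 0
    rw [RingHom.id_apply, smul_eq_mul, Finset.mul_sum]
    refine Finset.sum_congr rfl fun j _ => ?_
    by_cases h : (j : ℕ) < r <;> simp [h]

lemma psum_al (l i r : ℕ) (hi : i < l) :
    psumL l r (al l i) = if i < r then 1 else 0 := by
  show (∑ j : Fin l, if (j : ℕ) < r then al l i j else 0) = _
  rw [show (∑ j : Fin l, if (j : ℕ) < r then al l i j else 0)
      = ∑ j : Fin l, if j = (⟨i, hi⟩ : Fin l) then (if i < r then 1 else 0) else 0 from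
    Finset.sum_congr rfl fun j _ => by
      rcases eq_or_ne j (⟨i, hi⟩ : Fin l) with h | h
      · subst h; simp [al]
      · have hne : (j : ℕ) ≠ i := fun hji => h (Fin.ext hji)
        simp [al, hne, h]]
  rw [Finset.sum_ite_eq' Finset.univ]
  simp

lemma sum_indicator_lt (l r : ℕ) :
    (∑ j : Fin l, if (j : ℕ) < r then (1 : ℤ) else 0) = (min r l : ℕ) := by
  induction l with
  | zero => simp
  | succ k ih =>
    rw [Fin.sum_univ_castSucc]
    simp only [Fin.coe_castSucc, Fin.val_last]
    rw [ih]
    split_ifs with h <;> push_cast <;> omega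

lemma psum_ga (l r' r : ℕ) (h3 : 3 ≤ r') (hr'l : r' ≤ l) (hrl : r ≤ l) :
    (r : ℤ) ∣ psumL l r (ga l r') := by
  rcases le_or_gt r r' with hle | hlt
  · have : psumL l r (ga l r') = ∑ j : Fin l, if (j : ℕ) < r then (1:ℤ) else 0 := by
      show (∑ j : Fin l, if (j : ℕ) < r then ga l r' j else 0) = _
      refine Finset.sum_congr rfl fun j _ => ?_
      by_cases h : (j : ℕ) < r
      · have : (j : ℕ) < r' := lt_of_lt_of_le h hle
        simp [ga, h, this]
      · simp [h]
    rw [this, sum_indicator_lt]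
    have : min r l = r := by omega
    rw [this]
  · have hr'lt : r' < l := lt_of_lt_of_le hlt hrl
    have : psumL l r (ga l r') = ∑ j : Fin l,
        ((if (j : ℕ) < r' then (1:ℤ) else 0)
          + (if j = (⟨r', hr'lt⟩ : Fin l) then -(r' : ℤ) else 0)) := by
      show (∑ j : Fin l, if (j : ℕ) < r then ga l r' j else 0) = _
      refine Finset.sum_congr rfl fun j _ => ?_
      simp only [ga, Fin.ext_iff, Fin.val_mk]
      split_ifs <;> omega
    rw [this, Finset.sum_add_distrib, sum_indicator_lt, Finset.sum_ite_eq' Finset.univ]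
    have : min r' l = r' := by omega
    simp [this]

def D' (l : ℕ) : Submodule ℤ (Fin l → ℤ) where
  carrier := {x | ∀ r, 3 ≤ r → r ≤ l → (r : ℤ) ∣ psumL l r x}
  add_mem' := fun ha hb r h3 hrl => by
    rw [map_add]; exact dvd_add (ha r h3 hrl) (hb r h3 hrl)
  zero_mem' := fun r _ _ => by rw [map_zero]; exact dvd_zero _
  smul_mem' := fun c x hx r h3 hrl => by
    rw [map_smul, smul_eq_mul]; exact (hx r h3 hrl).mul_left c

lemma D_le (l : ℕ) (hl : 3 ≤ l) : D l ≤ D' l := by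
  rw [D, Submodule.span_le]
  rintro x ((rfl | rfl) | ⟨r', h3, hr'l, rfl⟩)
  · intro r h3 hrl
    rw [map_sub, psum_al l 0 r (by omega), psum_al l 1 r (by omega)]
    simp [show (0:ℕ) < r by omega, show (1:ℕ) < r by omega]
  · intro r h3 hrl
    rw [map_sub, psum_al l 1 r (by omega), psum_al l 2 r (by omega)]
    simp [show (1:ℕ) < r by omega, show (2:ℕ) < r by omega]
  · intro r hr3 hrl
    exact psum_ga l r' r h3 hr'l hrl

def wv (l r : ℕ) : Fin l → ℤ := fun j =>
  (if (j : ℕ) + 1 = r then (if r ≤ 2 then 1 else (r : ℤ)) else 0)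
  + (if (j : ℕ) = r then -(if r ≤ 2 then 1 else (r : ℤ)) else 0)

lemma wv_mem (l r : ℕ) (hl : 3 ≤ l) (h1 : 1 ≤ r) (hrl : r ≤ l) : wv l r ∈ D l := by
  have hmem : ∀ s, 3 ≤ s → s ≤ l → ga l s ∈ D l := fun s h3 hsl =>
    Submodule.subset_span (Or.inr ⟨s, h3, hsl, rfl⟩)
  have he1 : al l 0 - al l 1 ∈ D l := Submodule.subset_span (Or.inl (Or.inl rfl))
  have he2 : al l 1 - al l 2 ∈ D l := Submodule.subset_span (Or.inl (Or.inr rfl))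
  rcases show r = 1 ∨ r = 2 ∨ r = 3 ∨ 4 ≤ r by omega with rfl | rfl | rfl | h4
  · have : wv l 1 = al l 0 - al l 1 := by
      funext j; simp only [wv, al, Pi.sub_apply]; split_ifs <;> omega
    rw [this]; exact he1
  · have : wv l 2 = al l 1 - al l 2 := by
      funext j; simp only [wv, al, Pi.sub_apply]; split_ifs <;> omega
    rw [this]; exact he2
  · have : wv l 3 = ga l 3 - ((al l 0 - al l 1) + (2:ℤ) • (al l 1 - al l 2)) := by
      funext j
      simp only [wv, ga, al, Pi.sub_apply, Pi.add_apply, Pi.smul_apply, smul_eq_mul]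
      split_ifs <;> omega
    rw [this]
    exact sub_mem (hmem 3 (by omega) hrl) (add_mem he1 (Submodule.smul_mem _ _ he2))
  · have : wv l r = ga l r - ga l (r - 1) := by
      funext j
      simp only [wv, ga, Pi.sub_apply]
      split_ifs <;> omega
    rw [this]
    exact sub_mem (hmem r (by omega) hrl) (hmem (r-1) (by omega) (by omega))

lemma psum_zero (l : ℕ) (x : Fin l → ℤ) : psumL l 0 x = 0 := by
  show (∑ j : Fin l, if (j : ℕ) < 0 then x j else 0) = 0
  simp

lemma psum_succ_sub (l : ℕ) (x : Fin l → ℤ) (j : Fin l) :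
    psumL l ((j : ℕ) + 1) x - psumL l (j : ℕ) x = x j := by
  show ((∑ i : Fin l, if (i : ℕ) < (j : ℕ) + 1 then x i else 0)
      - ∑ i : Fin l, if (i : ℕ) < (j : ℕ) then x i else 0) = x j
  rw [← Finset.sum_sub_distrib]
  rw [show (∑ i : Fin l, ((if (i : ℕ) < (j : ℕ) + 1 then x i else 0)
      - if (i : ℕ) < (j : ℕ) then x i else 0))
      = ∑ i : Fin l, if i = j then x i else 0 from
    Finset.sum_congr rfl fun i _ => by
      rcases lt_trichotomy (i : ℕ) (j : ℕ) with h | h | h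
      · have h1 : (i : ℕ) < (j : ℕ) + 1 := by omega
        have h2 : i ≠ j := Fin.ne_of_val_ne (by omega)
        simp [h, h1, h2]
      · have h2 : i = j := Fin.ext h
        simp [h2]
      · have h1 : ¬ (i : ℕ) < (j : ℕ) + 1 := by omega
        have h2 : i ≠ j := Fin.ne_of_val_ne (by omega)
        simp [show ¬ (i:ℕ) < (j:ℕ) by omega, h1, h2]]
  rw [Finset.sum_ite_eq' Finset.univ]
  simp

lemma D_ge (l : ℕ) (hl : 3 ≤ l) (x : Fin l → ℤ)
    (hx : ∀ r, 3 ≤ r → r ≤ l → (r : ℤ) ∣ psumL l r x) : x ∈ D l := by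
  set c : ℕ → ℤ := fun r => if r ≤ 2 then psumL l r x else psumL l r x / r with hc
  have hce : ∀ r, r ≤ l → c r * (if r ≤ 2 then 1 else (r : ℤ)) = psumL l r x := by
    intro r hrl
    by_cases h2 : r ≤ 2
    · simp [hc, h2]
    · simp only [hc, h2, if_false]
      exact Int.ediv_mul_cancel (hx r (by omega) hrl)
  have key : x = ∑ r ∈ Finset.Icc 1 l, c r • wv l r := by
    funext j
    rw [Finset.sum_apply]
    have hterm : ∀ r ∈ Finset.Icc 1 l, (c r • wv l r) j
        = (if (j : ℕ) + 1 = r then c r * (if r ≤ 2 then 1 else (r:ℤ)) else 0)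
          + (if (j : ℕ) = r then -(c r * (if r ≤ 2 then 1 else (r:ℤ))) else 0) := by
      intro r _
      simp only [Pi.smul_apply, wv, smul_eq_mul, mul_add]
      congr 1 <;> split_ifs <;> ring
    rw [Finset.sum_congr rfl hterm, Finset.sum_add_distrib,
      Finset.sum_ite_eq, Finset.sum_ite_eq]
    have hj1 : (j : ℕ) + 1 ∈ Finset.Icc 1 l := by
      rw [Finset.mem_Icc]; exact ⟨by omega, j.isLt⟩
    rw [if_pos hj1, hce ((j:ℕ)+1) j.isLt]
    by_cases hj0 : (j : ℕ) ∈ Finset.Icc 1 l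
    · rw [if_pos hj0, hce (j:ℕ) (by omega)]
      have := psum_succ_sub l x j
      linarith
    · rw [if_neg hj0]
      have hj00 : (j : ℕ) = 0 := by
        rw [Finset.mem_Icc] at hj0; omega
      have := psum_succ_sub l x j
      rw [hj00] at this ⊢
      rw [psum_zero] at this
      linarith
  rw [key]
  exact Submodule.sum_mem _ fun r hr =>
    Submodule.smul_mem _ _ (wv_mem l r hl (Finset.mem_Icc.1 hr).1 (Finset.mem_Icc.1 hr).2)

lemma mem_D_iff (l : ℕ) (hl : 3 ≤ l) (x : Fin l → ℤ) :
    x ∈ D l ↔ ∀ r, 3 ≤ r → r ≤ l → (r : ℤ) ∣ psumL l r x :=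
  ⟨fun h => D_le l hl h, fun h => D_ge l hl x h⟩

lemma psum_lam (l : ℕ) (hl : 5 ≤ l) (m : ℕ → ℕ) (n : ℕ) (r : ℕ)
    (h2 : 2 ≤ r) (hrl : r ≤ l) :
    psumL l r (lam l m n) = (if 3 ≤ r ∧ r ≤ l - 2 then (m r : ℤ) else 0) + n := by
  rw [lam, map_add, map_smul, map_sum, psum_al l 1 r (by omega), if_pos (by omega : 1 < r)]
  rw [show (∑ r' ∈ Finset.Icc 3 (l-2), psumL l r ((m r' : ℤ) • (al l (r'-1) - al l r')))
      = ∑ r' ∈ Finset.Icc 3 (l-2), if r' = r then (m r' : ℤ) else 0 from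
    Finset.sum_congr rfl fun r' hr' => by
      obtain ⟨h3', hl'⟩ := Finset.mem_Icc.1 hr'
      rw [map_smul, map_sub, psum_al l (r'-1) r (by omega), psum_al l r' r (by omega),
        smul_eq_mul]
      split_ifs <;> first | (exfalso; omega) | ring ]
  rw [Finset.sum_ite_eq' (Finset.Icc 3 (l-2))]
  simp [Finset.mem_Icc]

lemma key (l : ℕ) (hl : 5 ≤ l) (m : ℕ → ℕ) (n : ℕ) :
    (2 : ℤ) • lam l m n ∈ D l ↔
      (∀ r, 3 ≤ r → r ≤ l - 2 → r ∣ 2 * (m r + n)) ∧ (l-1) ∣ 2*n ∧ l ∣ 2*n := by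
  rw [mem_D_iff l (by omega)]
  constructor
  · intro H
    refine ⟨fun r h3 hr => ?_, ?_, ?_⟩
    · have h := H r h3 (by omega)
      rw [map_smul, smul_eq_mul, psum_lam l hl m n r (by omega) (by omega),
        if_pos ⟨h3, hr⟩] at h
      exact_mod_cast h
    · have h := H (l-1) (by omega) (by omega)
      rw [map_smul, smul_eq_mul, psum_lam l hl m n (l-1) (by omega) (by omega),
        if_neg (by omega), zero_add] at h
      exact_mod_cast h
    · have h := H l (by omega) (by omega)
      rw [map_smul, smul_eq_mul, psum_lam l hl m n l (by omega) (by omega),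
        if_neg (by omega), zero_add] at h
      exact_mod_cast h
  · rintro ⟨H1, H2, H3⟩ r h3 hrl
    rw [map_smul, smul_eq_mul, psum_lam l hl m n r (by omega) hrl]
    by_cases hc : r ≤ l - 2
    · rw [if_pos ⟨h3, hc⟩]
      exact_mod_cast H1 r h3 hc
    · rw [if_neg (by omega), zero_add]
      rcases show r = l - 1 ∨ r = l by omega with rfl | rfl
      · exact_mod_cast H2
      · exact_mod_cast H3

/-- For `λ = λ(m₃, …, m_{l-2}, n)` with `0 ≤ m_r ≤ r-1`, `0 ≤ n ≤ l(l-1)-1`: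
`2λ ∈ D` (equivalently `D + λ = D - λ`) iff either `n = 0` and each `m_r = 0`
for odd `r`, `m_r ∈ {0, r/2}` for even `r`; or `n = l(l-1)/2` and
`2m_r + l(l-1) ≡ 0 (mod r)` for all `3 ≤ r ≤ l-2`. -/
theorem stmt12 (l : ℕ) (hl : 5 ≤ l) (m : ℕ → ℕ) (n : ℕ)
    (hm : ∀ r : ℕ, 3 ≤ r → r ≤ l - 2 → m r ≤ r - 1)
    (hm0 : ∀ r : ℕ, ¬(3 ≤ r ∧ r ≤ l - 2) → m r = 0)
    (hn : n ≤ l * (l - 1) - 1) :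
    (2 : ℤ) • lam l m n ∈ D l ↔
      (n = 0 ∧ ∀ r : ℕ, 3 ≤ r → r ≤ l - 2 →
        (Odd r → m r = 0) ∧ (Even r → m r = 0 ∨ m r = r / 2)) ∨
      (n = l * (l - 1) / 2 ∧ ∀ r : ℕ, 3 ≤ r → r ≤ l - 2 →
        r ∣ 2 * m r + l * (l - 1)) := by
  rw [key l hl m n]
  have hPeven : l * (l - 1) % 2 = 0 := Nat.even_iff.1 (Nat.even_mul_pred_self l)
  have hPbig : 20 ≤ l * (l - 1) := by
    calc (20 : ℕ) = 5 * 4 := by norm_num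
    _ ≤ l * (l - 1) := Nat.mul_le_mul hl (by omega)
  constructor
  · rintro ⟨H1, H2, H3⟩
    have hcop : Nat.Coprime l (l - 1) :=
      (Nat.coprime_self_sub_right (by omega)).2 (Nat.coprime_one_right l)
    have hP : l * (l - 1) ∣ 2 * n := Nat.Coprime.mul_dvd_of_dvd_of_dvd hcop H3 H2
    obtain ⟨k, hk⟩ := hP
    have hkle : k ≤ 1 := by
      by_contra hk2
      have : l * (l - 1) * 2 ≤ l * (l - 1) * k := Nat.mul_le_mul_left _ (by omega)
      omega
    interval_cases k
    · left
      have hn0 : n = 0 := by omega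
      subst hn0
      refine ⟨rfl, fun r h3 hrl2 => ?_⟩
      obtain ⟨t, ht⟩ := H1 r h3 hrl2
      have hmr := hm r h3 hrl2
      have htle : t ≤ 1 := by
        by_contra h
        have : r * 2 ≤ r * t := Nat.mul_le_mul_left _ (by omega)
        omega
      interval_cases t
      · exact ⟨fun _ => by omega, fun _ => Or.inl (by omega)⟩
      · refine ⟨fun hodd => ?_, fun _ => Or.inr (by omega)⟩
        rw [Nat.odd_iff] at hodd
        omega
    · right
      have h2n : 2 * n = l * (l - 1) := by omega
      refine ⟨by omega, fun r h3 hrl2 => ?_⟩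
      have hd := H1 r h3 hrl2
      have he : 2 * (m r + n) = 2 * m r + l * (l - 1) := by omega
      rwa [he] at hd
  · rintro (⟨rfl, hc⟩ | ⟨hn2, hc⟩)
    · refine ⟨fun r h3 hrl2 => ?_, by simp, by simp⟩
      rcases Nat.even_or_odd r with he | ho
      · rcases (hc r h3 hrl2).2 he with h0 | h0
        · simp [h0]
        · have h2r : 2 * (r / 2) = r := Nat.two_mul_div_two_of_even he
          exact ⟨1, by omega⟩
      · have h0 := (hc r h3 hrl2).1 ho
        simp [h0]
    · have h2n : 2 * n = l * (l - 1) := by omega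
      refine ⟨fun r h3 hrl2 => ?_, ?_, ?_⟩
      · have hd := hc r h3 hrl2
        have he : 2 * (m r + n) = 2 * m r + l * (l - 1) := by omega
        rwa [he]
      · rw [h2n]; exact dvd_mul_left (l - 1) l
      · rw [h2n]; exact dvd_mul_right l (l - 1)
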